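/- arXiv:1903.01165 — 2 statements merged into one kernel-verified Lean document; each statement's English description precedes it below -/
import Mathlib

section
/- Let G be a finite simple graph with vertex set V, x ∈ V, p : V → [0,1] reliabilities, and T ⊆ V∖{x}. Define p' : V → [0,1] by p'_j = 0 for j ∈ T and p'_j = p_j otherwise. Then Sh[v̄_{NC1}](x) evaluated at reliabilities p' is greater than or equal to Sh[v̄_{NC1}](x) evaluated at reliabilities p. In other words, no removal attack on the centrality of a player in the game Γ_{NC1} can decrease its Shapley value. -/
open Finset

attribute [local instance] Classical.propDecidable

noncomputable section

/-- `Π_{T,S}(p) = (∏_{i∈T} p i) * (∏_{i∈S\T} (1 - p i))`. -/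
def prodPi {α : Type*} (p : α → ℝ) (T S : Finset α) : ℝ :=
  (∏ i ∈ T, p i) * (∏ i ∈ S \ T, (1 - p i))

/-- Reliability extension of a TU-game. -/
def relExt {α : Type*} (p : α → ℝ) (v : Finset α → ℝ) (S : Finset α) : ℝ :=
  ∑ T ∈ S.powerset, v T * prodPi p T S

/-- The set of players preceding `x` in the ordering `σ`. -/
def precedingSet {α : Type*} [Fintype α] (σ : Fin (Fintype.card α) ≃ α) (x : α) : Finset α :=
  Finset.univ.filter fun y => σ.symm y < σ.symm x

/-- The Shapley value of player `x` in the TU-game `v`. -/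
def shapley {α : Type*} [Fintype α] (v : Finset α → ℝ) (x : α) : ℝ :=
  (1 / ((Fintype.card α).factorial : ℝ)) *
    ∑ σ : Fin (Fintype.card α) ≃ α,
      (v (insert x (precedingSet σ x)) - v (precedingSet σ x))

/-- The (open) neighborhood of `v` as a finset. -/
def nbhd {α : Type*} [Fintype α] (G : SimpleGraph α) (v : α) : Finset α :=
  Finset.univ.filter fun y => G.Adj v y

/-- `N̂(v) = {v} ∪ N(v)`. -/
def closedNbhd {α : Type*} [Fintype α] (G : SimpleGraph α) (v : α) : Finset α :=
  insert v (nbhd G v)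

/-- `δ(S)`: vertices outside `S` having a neighbor in `S`. -/
def extBoundary {α : Type*} [Fintype α] (G : SimpleGraph α) (S : Finset α) : Finset α :=
  Finset.univ.filter fun y => y ∉ S ∧ ∃ x ∈ S, G.Adj x y

/-- The network centrality game `Γ_{NC1}`: `v(S) = |S ∪ δ(S)|`. -/
def vNC1 {α : Type*} [Fintype α] (G : SimpleGraph α) (S : Finset α) : ℝ :=
  ((S ∪ extBoundary G S).card : ℝ)

/-!
Writing `N̂(u)` for the closed neighbourhood of `u`, a coalition `S` is worth
`v_{NC1}(S) = #{u | S ∩ N̂(u) ≠ ∅}`.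
Under reliabilities `p` the players of `S` are present independently, so
`v̄(S) = ∑_u (1 - ∏_{i ∈ S ∩ N̂(u)} (1 - p_i))`, and the marginal contribution of `x ∉ S` is
`p_x · ∑_{u : x ∈ N̂(u)} ∏_{i ∈ S ∩ N̂(u)} (1 - p_i)`. This is antitone in the reliabilities of the
players other than `x`, so setting some of them to `0` raises every marginal contribution of `x`,
hence its Shapley value.
-/

lemma sum_prodPi_powerset {α : Type*} (p : α → ℝ) (S : Finset α) :
    ∑ T ∈ S.powerset, prodPi p T S = 1 := by
  simp only [prodPi, ← prod_add, add_sub_cancel, prod_const_one]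

lemma relExt_sum {α ι : Type*} (p : α → ℝ) (s : Finset ι) (v : ι → Finset α → ℝ)
    (S : Finset α) :
    relExt p (fun T => ∑ u ∈ s, v u T) S = ∑ u ∈ s, relExt p (v u) S := by
  simp only [relExt, sum_mul]
  exact sum_comm

lemma relExt_one_sub {α : Type*} (p : α → ℝ) (v : Finset α → ℝ) (S : Finset α) :
    relExt p (fun T => 1 - v T) S = 1 - relExt p v S := by
  simp only [relExt, sub_mul, one_mul, sum_sub_distrib, sum_prodPi_powerset]

lemma relExt_ite_disjoint {α : Type*} (p : α → ℝ) (A S : Finset α) :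
    relExt p (fun T => if Disjoint T A then 1 else 0) S = ∏ i ∈ S ∩ A, (1 - p i) := by
  have hterm : ∀ T, (if Disjoint T A then (1 : ℝ) else 0) * prodPi p T S =
      (∏ i ∈ T, if i ∉ A then p i else 0) * ∏ i ∈ S \ T, (1 - p i) := by
    intro T
    simp only [prod_ite_zero, prodPi, ← disjoint_left]
    split_ifs <;> ring
  have hfactor : ∀ i ∈ S, ((if i ∉ A then p i else 0) + (1 - p i)) =
      if i ∈ A then 1 - p i else 1 := by
    intro i _
    split_ifs <;> simp_all
  simp only [relExt, hterm, ← prod_add, prod_congr rfl hfactor, prod_ite_mem]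

lemma shapley_le_shapley {α : Type*} [Fintype α] {v w : Finset α → ℝ} {x : α}
    (h : ∀ S, x ∉ S → v (insert x S) - v S ≤ w (insert x S) - w S) :
    shapley v x ≤ shapley w x :=
  mul_le_mul_of_nonneg_left (sum_le_sum fun σ _ => h _ (by simp [precedingSet]))
    (by positivity)

def coverGame {ι α : Type*} [Fintype ι] (A : ι → Finset α) (S : Finset α) : ℝ :=
  ∑ u, (1 - if Disjoint S (A u) then 1 else 0)

lemma mem_union_extBoundary {α : Type*} [Fintype α] (G : SimpleGraph α) (S : Finset α) (u : α) :
    u ∈ S ∪ extBoundary G S ↔ ¬Disjoint S (closedNbhd G u) := by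
  simp only [not_disjoint_iff, closedNbhd, nbhd, extBoundary, mem_union, mem_filter, mem_univ,
    mem_insert, true_and]
  constructor
  · rintro (h | ⟨-, w, hw, hadj⟩)
    · exact ⟨u, h, Or.inl rfl⟩
    · exact ⟨w, hw, Or.inr hadj.symm⟩
  · rintro ⟨w, hw, rfl | hadj⟩
    · exact Or.inl hw
    · by_cases hu : u ∈ S
      · exact Or.inl hu
      · exact Or.inr ⟨hu, w, hw, hadj.symm⟩

lemma vNC1_eq_coverGame {α : Type*} [Fintype α] (G : SimpleGraph α) :
    vNC1 G = coverGame (closedNbhd G) := by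
  ext S
  have hset : S ∪ extBoundary G S = univ.filter fun u => ¬Disjoint S (closedNbhd G u) := by
    ext u
    simp only [mem_union_extBoundary, mem_filter, mem_univ, true_and]
  rw [vNC1, hset, card_filter, coverGame]
  push_cast
  refine sum_congr rfl fun u _ => ?_
  split_ifs <;> simp_all

lemma relExt_coverGame {ι α : Type*} [Fintype ι] (A : ι → Finset α) (p : α → ℝ)
    (S : Finset α) :
    relExt p (coverGame A) S = ∑ u, (1 - ∏ i ∈ S ∩ A u, (1 - p i)) := by
  change relExt p (fun T => ∑ u, (1 - if Disjoint T (A u) then 1 else 0)) S = _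
  simp only [relExt_sum, relExt_one_sub, relExt_ite_disjoint]

lemma relExt_coverGame_insert_sub {ι α : Type*} [Fintype ι] (A : ι → Finset α) (p : α → ℝ)
    {x : α} {S : Finset α} (hx : x ∉ S) :
    relExt p (coverGame A) (insert x S) - relExt p (coverGame A) S =
      p x * ∑ u with x ∈ A u, ∏ i ∈ S ∩ A u, (1 - p i) := by
  rw [relExt_coverGame, relExt_coverGame, ← sum_sub_distrib, sum_filter, mul_sum]
  refine sum_congr rfl fun u _ => ?_
  by_cases hxA : x ∈ A u
  · rw [if_pos hxA, insert_inter_of_mem hxA, prod_insert fun h => hx (mem_inter.mp h).1]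
    ring
  · rw [if_neg hxA, insert_inter_of_notMem hxA]
    ring

lemma relExt_coverGame_marginal_antitone {ι α : Type*} [Fintype ι] (A : ι → Finset α)
    {p q : α → ℝ} (hqp : ∀ i, q i ≤ p i) (hp : ∀ i, p i ≤ 1) {x : α} (hpx : 0 ≤ p x)
    (hqx : q x = p x) {S : Finset α} (hx : x ∉ S) :
    relExt p (coverGame A) (insert x S) - relExt p (coverGame A) S ≤
      relExt q (coverGame A) (insert x S) - relExt q (coverGame A) S := by
  rw [relExt_coverGame_insert_sub A p hx, relExt_coverGame_insert_sub A q hx, hqx]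
  gcongr with u _ i _
  · exact fun i _ => sub_nonneg.mpr (hp i)
  · exact hqp i

theorem stmt_8 {α : Type*} [Fintype α] [DecidableEq α] (G : SimpleGraph α)
    (x : α) (p : α → ℝ) (hp : ∀ i, p i ∈ Set.Icc (0 : ℝ) 1)
    (T : Finset α) (hT : x ∉ T) :
    shapley (relExt p (vNC1 G)) x ≤
      shapley (relExt (fun j => if j ∈ T then 0 else p j) (vNC1 G)) x := by
  refine shapley_le_shapley fun S hxS => ?_
  rw [vNC1_eq_coverGame]
  refine relExt_coverGame_marginal_antitone _ (fun i => ?_) (fun i => (hp i).2) (hp x).1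
    (if_neg hT) hxS
  split_ifs
  exacts [(hp i).1, le_rfl]

end
end

section
/- Let n ≥ 5 and let C_n be the cycle graph on vertex set {1,2,…,n} with edges {i, i+1} for 1 ≤ i < n and the edge {n, 1}. For every reliability vector p : {1,…,n} → [0,1], the Shapley value of vertex 1 in the reliability extension of Γ_{NC1} on C_n equals Sh[v̄_{NC1}](1) = p_1 · ( (p_2·p_n + p_2·p_3 + p_{n−1}·p_n)/3 − (p_3 + p_{n−1})/2 − p_2 − p_n + 3 ). -/
open Finset

attribute [local instance] Classical.propDecidable

noncomputable section

/-- The cycle graph on `Fin n`. -/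
def cycleGraph (n : ℕ) : SimpleGraph (Fin n) :=
  SimpleGraph.fromRel (fun i j => (i.val + 1) % n = j.val)

/-!
Since `vNC1 G T` counts the vertices `v` whose closed neighbourhood `N̂(v)` meets `T`, the
reliability extension is `∑ v, (1 - ∏_{i ∈ S ∩ N̂(v)} (1 - p i))`, and adding `x ∉ S` to `S`
contributes `p x * ∑_{v ∈ N̂(x)} ∏_{i ∈ S ∩ N̂(v)} (1 - p i)`. Expanding the products, and using
that all players of a set `B ∌ x` precede `x` in a `1 / (#B + 1)` share of the orderings, gives
for every graph
`Sh(x) = p x * ∑_{v ∈ N̂(x)} ∑_{B ⊆ N̂(v) \ {x}} (-1)^#B (∏_{i ∈ B} p i) / (#B + 1)`.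
On the cycle (vertices `Fin n`, so the paper's vertex `1` is `0`) the sets `N̂(v) \ {0}` are
`{1, n - 1}`, `{1, 2}` and `{n - 2, n - 1}`, and a pair `{a, b}` contributes
`1 - (p a + p b) / 2 + p a * p b / 3`.
-/

section ReliabilityExtension

variable {α : Type*}

lemma sum_powerset_prodPi (p : α → ℝ) (S : Finset α) :
    ∑ T ∈ S.powerset, prodPi p T S = 1 := by
  simp [prodPi, ← Finset.prod_add]

lemma sum_powerset_disjoint_prodPi (p : α → ℝ) (A S : Finset α) :
    ∑ T ∈ S.powerset, (if Disjoint T A then 1 else 0) * prodPi p T S =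
      ∏ i ∈ S ∩ A, (1 - p i) := by
  have hT : ∀ T : Finset α, (if Disjoint T A then 1 else 0) * ∏ i ∈ T, p i =
      ∏ i ∈ T, if i ∉ A then p i else 0 := by
    intro T
    rw [Finset.prod_ite_zero]
    simp only [← Finset.disjoint_left, ite_mul, one_mul, zero_mul]
  simp_rw [prodPi, ← mul_assoc, hT, ← Finset.prod_add, ← Finset.prod_ite_mem]
  refine Finset.prod_congr rfl fun i _ => ?_
  split_ifs <;> ring

variable [Fintype α]

lemma vNC1_eq_sum (G : SimpleGraph α) (T : Finset α) :
    vNC1 G T = ∑ v, if Disjoint T (closedNbhd G v) then 0 else 1 := by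
  have hcover : T ∪ extBoundary G T = univ.filter fun v => ¬Disjoint T (closedNbhd G v) := by
    ext v
    simp only [mem_union, extBoundary, closedNbhd, nbhd, mem_filter, mem_univ, true_and,
      not_disjoint_iff, mem_insert, G.adj_comm v]
    constructor
    · rintro (hv | ⟨-, x, hx, hxv⟩)
      · exact ⟨v, hv, Or.inl rfl⟩
      · exact ⟨x, hx, Or.inr hxv⟩
    · rintro ⟨x, hx, rfl | hxv⟩
      · exact Or.inl hx
      · exact or_iff_not_imp_left.2 fun hv => ⟨hv, x, hx, hxv⟩
  rw [vNC1, hcover, Finset.card_filter]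
  push_cast
  exact Finset.sum_congr rfl fun v _ => by split_ifs <;> rfl

lemma relExt_vNC1 (G : SimpleGraph α) (p : α → ℝ) (S : Finset α) :
    relExt p (vNC1 G) S = ∑ v, (1 - ∏ i ∈ S ∩ closedNbhd G v, (1 - p i)) := by
  simp_rw [relExt, vNC1_eq_sum, Finset.sum_mul]
  rw [Finset.sum_comm]
  refine Finset.sum_congr rfl fun v _ => ?_
  have hT : ∀ T, (if Disjoint T (closedNbhd G v) then 0 else 1) * prodPi p T S =
      prodPi p T S - (if Disjoint T (closedNbhd G v) then 1 else 0) * prodPi p T S := by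
    intro T
    split_ifs <;> ring
  rw [Finset.sum_congr rfl fun T _ => hT T, Finset.sum_sub_distrib, sum_powerset_prodPi,
    sum_powerset_disjoint_prodPi]

lemma mem_closedNbhd_comm (G : SimpleGraph α) {u v : α} :
    u ∈ closedNbhd G v ↔ v ∈ closedNbhd G u := by
  simp only [closedNbhd, nbhd, mem_insert, mem_filter, mem_univ, true_and, G.adj_comm, eq_comm]

lemma sum_closedNbhd {M : Type*} [AddCommMonoid M] (G : SimpleGraph α) (f : α → M) (x : α) :
    ∑ v ∈ closedNbhd G x, f v = f x + ∑ v ∈ nbhd G x, f v :=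
  Finset.sum_insert (by simp [nbhd])

lemma erase_closedNbhd_self [DecidableEq α] (G : SimpleGraph α) (x : α) :
    (closedNbhd G x).erase x = nbhd G x := by
  ext y
  simp only [closedNbhd, nbhd, mem_erase, mem_insert, mem_filter, mem_univ, true_and]
  exact ⟨fun h => h.2.resolve_left h.1, fun h => ⟨G.ne_of_adj h |>.symm, Or.inr h⟩⟩

lemma relExt_vNC1_insert_sub (G : SimpleGraph α) (p : α → ℝ) {x : α} {S : Finset α}
    (hx : x ∉ S) :
    relExt p (vNC1 G) (insert x S) - relExt p (vNC1 G) S =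
      p x * ∑ v ∈ closedNbhd G x, ∏ i ∈ S ∩ closedNbhd G v, (1 - p i) := by
  rw [relExt_vNC1, relExt_vNC1, ← Finset.sum_sub_distrib, Finset.mul_sum,
    ← Finset.sum_subset (subset_univ (closedNbhd G x))]
  · refine Finset.sum_congr rfl fun v hv => ?_
    rw [mem_closedNbhd_comm] at hv
    rw [Finset.insert_inter_of_mem hv,
      Finset.prod_insert fun h => hx (Finset.mem_of_mem_inter_left h)]
    ring
  · intro v _ hv
    rw [mem_closedNbhd_comm] at hv
    rw [Finset.insert_inter_of_notMem hv, sub_self]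

end ReliabilityExtension

section Orderings

variable {α : Type*} [Fintype α]

lemma notMem_precedingSet_self (σ : Fin (Fintype.card α) ≃ α) (x : α) :
    x ∉ precedingSet σ x := by
  simp [precedingSet]

lemma subset_precedingSet_iff {B : Finset α} {σ : Fin (Fintype.card α) ≃ α} {x : α} :
    B ⊆ precedingSet σ x ↔ ∀ y ∈ B, σ.symm y < σ.symm x := by
  simp [precedingSet, Finset.subset_iff]

lemma erase_subset_precedingSet_trans_swap {s : Finset α} {x y : α} (hx : x ∈ s) (hy : y ∈ s)
    {σ : Fin (Fintype.card α) ≃ α} (hσ : s.erase x ⊆ precedingSet σ x) :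
    s.erase y ⊆ precedingSet (σ.trans (Equiv.swap x y)) y := by
  rw [subset_precedingSet_iff] at hσ ⊢
  intro z hz
  simp only [Equiv.symm_trans_apply, Equiv.symm_swap, Equiv.swap_apply_right]
  refine hσ _ (Finset.mem_erase.2 ⟨?_, ?_⟩)
  · rw [Ne, Equiv.swap_apply_eq_iff, Equiv.swap_apply_left]
    exact Finset.ne_of_mem_erase hz
  · rw [Equiv.swap_apply_def]
    split_ifs
    exacts [hy, hx, Finset.mem_of_mem_erase hz]

lemma card_filter_erase_subset_precedingSet_mul_card {s : Finset α} {x : α} (hx : x ∈ s) :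
    #{σ : Fin (Fintype.card α) ≃ α | s.erase x ⊆ precedingSet σ x} * #s =
      (Fintype.card α).factorial := by
  -- every ordering has exactly one last player in `s`, and composing with the transposition
  -- `swap x y` exchanges the orderings in which `x` is last with those in which `y` is last
  set last : α → Finset (Fin (Fintype.card α) ≃ α) :=
    fun y => {σ | s.erase y ⊆ precedingSet σ y}
  have hlast : ∀ {σ y}, σ ∈ last y ↔ s.erase y ⊆ precedingSet σ y := by simp [last]
  have hcard : ∀ y ∈ s, #(last y) = #(last x) := fun y hy =>
    Finset.card_bij' (fun σ _ => σ.trans (Equiv.swap y x)) (fun σ _ => σ.trans (Equiv.swap x y))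
      (fun σ hσ => hlast.2 (erase_subset_precedingSet_trans_swap hy hx (hlast.1 hσ)))
      (fun σ hσ => hlast.2 (erase_subset_precedingSet_trans_swap hx hy (hlast.1 hσ)))
      (fun σ _ => by simp [Equiv.trans_assoc, Equiv.swap_comm y x])
      (fun σ _ => by simp [Equiv.trans_assoc, Equiv.swap_comm y x])
  have hdisj : (s : Set α).PairwiseDisjoint last := by
    intro y hy z hz hyz
    refine Finset.disjoint_left.2 fun σ hσy hσz => ?_
    rw [hlast, subset_precedingSet_iff] at hσy hσz
    exact lt_asymm (hσy z (Finset.mem_erase.2 ⟨Ne.symm hyz, hz⟩))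
      (hσz y (Finset.mem_erase.2 ⟨hyz, hy⟩))
  have hcover : s.biUnion last = univ := by
    refine Finset.eq_univ_of_forall fun σ => ?_
    obtain ⟨y, hy, hmax⟩ := s.exists_max_image (fun z => σ.symm z) ⟨x, hx⟩
    refine Finset.mem_biUnion.2 ⟨y, hy, hlast.2 (subset_precedingSet_iff.2 fun z hz => ?_)⟩
    exact (hmax z (Finset.mem_of_mem_erase hz)).lt_of_ne
      (σ.symm.injective.ne (Finset.ne_of_mem_erase hz))
  calc #(last x) * #s = ∑ y ∈ s, #(last y) := by
        rw [Finset.sum_congr rfl hcard, Finset.sum_const, smul_eq_mul, mul_comm]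
    _ = #(univ : Finset (Fin (Fintype.card α) ≃ α)) := by
        rw [← hcover, Finset.card_biUnion hdisj]
    _ = (Fintype.card α).factorial := by
        rw [Finset.card_univ, Fintype.card_equiv (Fintype.equivFin α).symm, Fintype.card_fin]

lemma card_filter_subset_precedingSet {x : α} {B : Finset α} (hx : x ∉ B) :
    (#{σ : Fin (Fintype.card α) ≃ α | B ⊆ precedingSet σ x} : ℝ) =
      (Fintype.card α).factorial / (#B + 1) := by
  have h := card_filter_erase_subset_precedingSet_mul_card (Finset.mem_insert_self x B)
  rw [Finset.erase_insert hx, Finset.card_insert_of_notMem hx] at h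
  rw [eq_div_iff (by positivity), ← h]
  push_cast
  ring

lemma prod_one_sub_inter_precedingSet (p : α → ℝ) (σ : Fin (Fintype.card α) ≃ α) (x : α)
    (A : Finset α) :
    ∏ i ∈ precedingSet σ x ∩ A, (1 - p i) =
      ∑ B ∈ A.powerset,
        (-1) ^ #B * (∏ i ∈ B, p i) * if B ⊆ precedingSet σ x then 1 else 0 := by
  rw [Finset.inter_comm, ← Finset.prod_ite_mem]
  calc ∏ i ∈ A, (if i ∈ precedingSet σ x then 1 - p i else 1)
      = ∏ i ∈ A, (1 - if i ∈ precedingSet σ x then p i else 0) :=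
        Finset.prod_congr rfl fun i _ => by split_ifs <;> ring
    _ = _ := by
        rw [Finset.prod_sub]
        refine Finset.sum_congr rfl fun B _ => ?_
        simp only [Finset.prod_const_one, Finset.prod_ite_zero, ← Finset.subset_iff]
        split_ifs <;> ring

lemma sum_prod_one_sub_inter_precedingSet (p : α → ℝ) {x : α} {A : Finset α} (hx : x ∉ A) :
    ∑ σ : Fin (Fintype.card α) ≃ α, ∏ i ∈ precedingSet σ x ∩ A, (1 - p i) =
      (Fintype.card α).factorial *
        ∑ B ∈ A.powerset, (-1) ^ #B * (∏ i ∈ B, p i) / (#B + 1) := by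
  simp_rw [prod_one_sub_inter_precedingSet]
  rw [Finset.sum_comm, Finset.mul_sum]
  refine Finset.sum_congr rfl fun B hB => ?_
  rw [← Finset.mul_sum, Finset.sum_boole,
    card_filter_subset_precedingSet fun h => hx (Finset.mem_powerset.1 hB h)]
  ring

end Orderings

theorem shapley_relExt_vNC1 {α : Type*} [Fintype α] [DecidableEq α] (G : SimpleGraph α)
    (p : α → ℝ) (x : α) :
    shapley (relExt p (vNC1 G)) x =
      p x * ∑ v ∈ closedNbhd G x, ∑ B ∈ ((closedNbhd G v).erase x).powerset,
        (-1) ^ #B * (∏ i ∈ B, p i) / (#B + 1) := by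
  unfold shapley
  simp_rw [relExt_vNC1_insert_sub G p (notMem_precedingSet_self _ x)]
  rw [← Finset.mul_sum, Finset.sum_comm, mul_left_comm, Finset.mul_sum]
  congr 1
  refine Finset.sum_congr rfl fun v _ => ?_
  rw [one_div_mul_eq_div, div_eq_iff (by positivity), mul_comm,
    ← sum_prod_one_sub_inter_precedingSet p (Finset.notMem_erase x (closedNbhd G v))]
  refine Finset.sum_congr rfl fun σ _ => ?_
  -- not `Finset.inter_erase`: the intersection uses the classical `DecidableEq` instance of the
  -- definitions, the erasure the given one
  congr 1
  ext y
  simp only [Finset.mem_inter, Finset.mem_erase]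
  exact ⟨fun h => ⟨h.1, ne_of_mem_of_not_mem h.1 (notMem_precedingSet_self σ x), h.2⟩,
    fun h => ⟨h.1, h.2.2⟩⟩

lemma sum_powerset_pair {α : Type*} [DecidableEq α] (p : α → ℝ) {a b : α} (hab : a ≠ b) :
    ∑ B ∈ ({a, b} : Finset α).powerset, (-1) ^ #B * (∏ i ∈ B, p i) / (#B + 1) =
      1 - (p a + p b) / 2 + p a * p b / 3 := by
  have hb : ({b} : Finset α).powerset = {∅, {b}} := by
    ext B
    simp [Finset.subset_singleton_iff]
  rw [Finset.sum_powerset_insert (Finset.notMem_singleton.2 hab), hb,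
    Finset.sum_pair (Finset.singleton_ne_empty b).symm,
    Finset.sum_pair (Finset.singleton_ne_empty b).symm]
  simp [hab]
  ring

section Cycle

lemma add_one_mod_eq_iff {a b n : ℕ} (ha : a < n) (hb : b < n) :
    (a + 1) % n = b ↔ b = a + 1 ∨ (a + 1 = n ∧ b = 0) := by
  rcases Nat.lt_or_eq_of_le (ha : a + 1 ≤ n) with h | h
  · rw [Nat.mod_eq_of_lt h]
    omega
  · rw [show a + 1 = n from h, Nat.mod_self]
    omega

lemma cycleGraph_adj {n : ℕ} {u v : Fin n} :
    (cycleGraph n).Adj u v ↔ u ≠ v ∧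
      (v.val = u.val + 1 ∨ u.val = v.val + 1 ∨ (u.val + 1 = n ∧ v.val = 0) ∨
        (v.val + 1 = n ∧ u.val = 0)) := by
  simp only [cycleGraph, SimpleGraph.fromRel_adj, add_one_mod_eq_iff u.isLt v.isLt,
    add_one_mod_eq_iff v.isLt u.isLt]
  tauto

variable {n : ℕ}

lemma nbhd_cycleGraph_zero (hn : 3 ≤ n) :
    nbhd (cycleGraph n) ⟨0, by omega⟩ = {⟨1, by omega⟩, ⟨n - 1, by omega⟩} := by
  ext u
  simp only [nbhd, mem_filter, mem_univ, true_and, cycleGraph_adj, mem_insert, mem_singleton,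
    ne_eq, Fin.ext_iff, and_true]
  omega

lemma erase_closedNbhd_cycleGraph_one (hn : 3 ≤ n) :
    (closedNbhd (cycleGraph n) ⟨1, by omega⟩).erase ⟨0, by omega⟩ =
      {⟨1, by omega⟩, ⟨2, by omega⟩} := by
  ext u
  simp only [closedNbhd, nbhd, mem_erase, mem_insert, mem_filter, mem_univ, true_and,
    cycleGraph_adj, mem_singleton, ne_eq, Fin.ext_iff]
  omega

lemma erase_closedNbhd_cycleGraph_last (hn : 3 ≤ n) :
    (closedNbhd (cycleGraph n) ⟨n - 1, by omega⟩).erase ⟨0, by omega⟩ =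
      {⟨n - 2, by omega⟩, ⟨n - 1, by omega⟩} := by
  ext u
  simp only [closedNbhd, nbhd, mem_erase, mem_insert, mem_filter, mem_univ, true_and,
    cycleGraph_adj, mem_singleton, ne_eq, Fin.ext_iff]
  omega

end Cycle

theorem stmt_12 (n : ℕ) (hn : 5 ≤ n)
    (p : Fin n → ℝ) :
    shapley (relExt p (vNC1 (cycleGraph n))) ⟨0, by omega⟩ =
      p ⟨0, by omega⟩ *
        ((p ⟨1, by omega⟩ * p ⟨n - 1, by omega⟩ + p ⟨1, by omega⟩ * p ⟨2, by omega⟩ +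
            p ⟨n - 2, by omega⟩ * p ⟨n - 1, by omega⟩) / 3 -
          (p ⟨2, by omega⟩ + p ⟨n - 2, by omega⟩) / 2 -
          p ⟨1, by omega⟩ - p ⟨n - 1, by omega⟩ + 3) := by
  have hn3 : 3 ≤ n := by omega
  have h1 : (⟨1, by omega⟩ : Fin n) ≠ ⟨n - 1, by omega⟩ := by
    simp only [Ne, Fin.mk.injEq]; omega
  have h2 : (⟨1, by omega⟩ : Fin n) ≠ ⟨2, by omega⟩ := by
    simp only [Ne, Fin.mk.injEq]; omega
  have h3 : (⟨n - 2, by omega⟩ : Fin n) ≠ ⟨n - 1, by omega⟩ := by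
    simp only [Ne, Fin.mk.injEq]; omega
  rw [shapley_relExt_vNC1, sum_closedNbhd, erase_closedNbhd_self, nbhd_cycleGraph_zero hn3,
    Finset.sum_pair h1, erase_closedNbhd_cycleGraph_one hn3,
    erase_closedNbhd_cycleGraph_last hn3, sum_powerset_pair p h1, sum_powerset_pair p h2,
    sum_powerset_pair p h3]
  ring

end
end
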